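/- arXiv:2112.08495 — 5 statements merged into one kernel-verified Lean document; each statement's English description precedes it below -/
import Mathlib

section
/- Suppose 0 < P(E=1) < 1 and E[τ(C) | E = 0] ≠ 0. Define the ratio score ψ = E[τ(C) | E=1] / E[τ(C) | E=0] and the difference score φ = E[τ(C) | E=1] − E[τ(C) | E=0]. Then ψ = (E[O·π(C)]/P(E=1)) / (E[O·(1 − π(C))]/P(E=0)) and φ = E[O·π(C)]/P(E=1) − E[O·(1 − π(C))]/P(E=0). (Lemma 1.) -/
/-!
The conditional expectation onto `σ(C)` is self-adjoint: `∫ E[O|C] · 1_A = ∫ O · E[1_A|C]`.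
With `A = {E = 1}` this turns `∫_{E=1} τ(C)` into `∫ O · π(C)`, and with `A = {E = 0}`, whose
indicator has conditional expectation `1 - π(C)`, into `∫ O · (1 - π(C))`. Both scores are
then the same expressions in these integrals.
-/

open MeasureTheory

namespace MeasureTheory

variable {Ω : Type*} {m m0 : MeasurableSpace Ω} {μ : Measure Ω}

theorem integral_condExp_mul_eq_integral_mul_condExp (hm : m ≤ m0) [SigmaFinite (μ.trim hm)]
    {f g : Ω → ℝ} (hf : Integrable f μ) (hg : Integrable g μ)
    (hfg : Integrable (μ[f|m] * g) μ) (hgf : Integrable (f * μ[g|m]) μ) :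
    ∫ x, μ[f|m] x * g x ∂μ = ∫ x, f x * μ[g|m] x ∂μ :=
  calc ∫ x, μ[f|m] x * g x ∂μ
      = ∫ x, μ[μ[f|m] * g|m] x ∂μ := (integral_condExp hm).symm
    _ = ∫ x, μ[f|m] x * μ[g|m] x ∂μ :=
        integral_congr_ae (condExp_mul_of_stronglyMeasurable_left stronglyMeasurable_condExp hfg hg)
    _ = ∫ x, μ[f * μ[g|m]|m] x ∂μ :=
        integral_congr_ae
          (condExp_mul_of_stronglyMeasurable_right stronglyMeasurable_condExp hgf hf).symm
    _ = ∫ x, f x * μ[g|m] x ∂μ := integral_condExp hm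

variable [IsFiniteMeasure μ]

theorem setIntegral_condExp_eq_integral_mul_condExp_indicator (hm : m ≤ m0) {f : Ω → ℝ}
    (hf : Integrable f μ) {s : Set Ω} (hs : MeasurableSet s) :
    ∫ x in s, μ[f|m] x ∂μ = ∫ x, f x * μ[s.indicator 1|m] x ∂μ := by
  have h_ind_le : ∀ x, ‖s.indicator (1 : Ω → ℝ) x‖ ≤ 1 := fun x ↦ by
    by_cases hx : x ∈ s <;> simp [hx]
  have h_condExp_le : ∀ᵐ x ∂μ, ‖μ[s.indicator (1 : Ω → ℝ)|m] x‖ ≤ 1 :=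
    ae_bdd_abs_condExp_of_ae_bdd_abs (.of_forall h_ind_le)
  have h_ind_int : Integrable (s.indicator (1 : Ω → ℝ)) μ := (integrable_const 1).indicator hs
  rw [← integral_indicator hs]
  calc ∫ x, s.indicator (μ[f|m]) x ∂μ
      = ∫ x, μ[f|m] x * s.indicator 1 x ∂μ := by
        congr 1 with x
        by_cases hx : x ∈ s <;> simp [hx]
    _ = ∫ x, f x * μ[s.indicator 1|m] x ∂μ :=
        integral_condExp_mul_eq_integral_mul_condExp hm hf h_ind_int
          (integrable_condExp.mul_bdd h_ind_int.aestronglyMeasurable (.of_forall h_ind_le))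
          (hf.mul_bdd (stronglyMeasurable_condExp.mono hm).aestronglyMeasurable h_condExp_le)

theorem condExp_indicator_compl_one (hm : m ≤ m0) {s : Set Ω} (hs : MeasurableSet s) :
    μ[sᶜ.indicator 1|m] =ᵐ[μ] 1 - μ[s.indicator (1 : Ω → ℝ)|m] := by
  have h_sub := condExp_sub (μ := μ) (integrable_const (1 : ℝ)) ((integrable_const 1).indicator hs) m
  rwa [condExp_const hm, ← Pi.one_def, ← Set.indicator_compl] at h_sub

theorem setIntegral_eq_integral_mul_of_ae_eq_condExp (hm : m ≤ m0) {f g p : Ω → ℝ}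
    (hf : Integrable f μ) {s : Set Ω} (hs : MeasurableSet s)
    (hg : g =ᵐ[μ] μ[f|m]) (hp : p =ᵐ[μ] μ[s.indicator 1|m]) :
    ∫ x in s, g x ∂μ = ∫ x, f x * p x ∂μ := by
  rw [setIntegral_congr_ae₀ hs.nullMeasurableSet (hg.mono fun x hx _ ↦ hx),
    setIntegral_condExp_eq_integral_mul_condExp_indicator hm hf hs]
  exact integral_congr_ae (hp.mono fun x hx ↦ congrArg (f x * ·) hx.symm)

end MeasureTheory

theorem stmt2_general
    {Ω : Type*} [MeasurableSpace Ω] {P : Measure Ω} [IsProbabilityMeasure P]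
    (O Ee C : Ω → ℝ)
    (hO : Integrable O P) (hEe : Measurable Ee) (hC : Measurable C)
    (hEbin : ∀ ω, Ee ω = 0 ∨ Ee ω = 1)
    (τ π : ℝ → ℝ)
    (hτver : (fun ω => τ (C ω)) =ᵐ[P] P[O | MeasurableSpace.comap C inferInstance])
    (hπver : (fun ω => π (C ω)) =ᵐ[P]
      P[(fun ω => if Ee ω = 1 then (1 : ℝ) else 0) | MeasurableSpace.comap C inferInstance]) :
    ((∫ ω in {ω | Ee ω = 1}, τ (C ω) ∂P) / (P {ω | Ee ω = 1}).toReal)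
        / ((∫ ω in {ω | Ee ω = 0}, τ (C ω) ∂P) / (P {ω | Ee ω = 0}).toReal)
      = ((∫ ω, O ω * π (C ω) ∂P) / (P {ω | Ee ω = 1}).toReal)
        / ((∫ ω, O ω * (1 - π (C ω)) ∂P) / (P {ω | Ee ω = 0}).toReal)
    ∧ ((∫ ω in {ω | Ee ω = 1}, τ (C ω) ∂P) / (P {ω | Ee ω = 1}).toReal)
        - ((∫ ω in {ω | Ee ω = 0}, τ (C ω) ∂P) / (P {ω | Ee ω = 0}).toReal)
      = ((∫ ω, O ω * π (C ω) ∂P) / (P {ω | Ee ω = 1}).toReal)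
        - ((∫ ω, O ω * (1 - π (C ω)) ∂P) / (P {ω | Ee ω = 0}).toReal) := by
  set s := {ω | Ee ω = 1}
  have hs : MeasurableSet s := hEe (measurableSet_singleton 1)
  have h_ind : (fun ω => if Ee ω = 1 then (1 : ℝ) else 0) = s.indicator 1 := by
    ext ω
    by_cases h : Ee ω = 1 <;> simp [s, h]
  have h_compl : {ω | Ee ω = 0} = sᶜ := by
    ext ω
    rcases hEbin ω with h | h <;> simp [s, h]
  rw [h_ind] at hπver
  have h_one : ∫ ω in s, τ (C ω) ∂P = ∫ ω, O ω * π (C ω) ∂P :=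
    setIntegral_eq_integral_mul_of_ae_eq_condExp hC.comap_le hO hs hτver hπver
  have h_zero : ∫ ω in {ω | Ee ω = 0}, τ (C ω) ∂P = ∫ ω, O ω * (1 - π (C ω)) ∂P := by
    rw [h_compl]
    refine setIntegral_eq_integral_mul_of_ae_eq_condExp hC.comap_le hO hs.compl hτver ?_
    filter_upwards [hπver, condExp_indicator_compl_one hC.comap_le hs] with ω hπ hcompl
    rw [hcompl, Pi.sub_apply, hπ, Pi.one_apply]
  rw [h_one, h_zero]
  exact ⟨rfl, rfl⟩

/-- **Lemma 1.** If `0 < P(E=1) < 1` and `E[τ(C) | E = 0] ≠ 0`, then the ratio score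
`ψ = E[τ(C)|E=1] / E[τ(C)|E=0]` equals `(E[O·π(C)]/P(E=1)) / (E[O·(1−π(C))]/P(E=0))`
and the difference score `φ = E[τ(C)|E=1] − E[τ(C)|E=0]` equals
`E[O·π(C)]/P(E=1) − E[O·(1−π(C))]/P(E=0)`. -/
theorem stmt2
    {Ω : Type*} [MeasurableSpace Ω] {P : Measure Ω} [IsProbabilityMeasure P]
    (O Ee C : Ω → ℝ)
    (hO : Integrable O P) (hEe : Measurable Ee) (hC : Measurable C)
    (hEbin : ∀ ω, Ee ω = 0 ∨ Ee ω = 1)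
    (τ π : ℝ → ℝ) (hτm : Measurable τ) (hπm : Measurable π)
    (hπ01 : ∀ x, π x ∈ Set.Icc (0 : ℝ) 1)
    (hτint : Integrable (fun ω => τ (C ω)) P)
    (hτver : (fun ω => τ (C ω)) =ᵐ[P] P[O | MeasurableSpace.comap C inferInstance])
    (hπver : (fun ω => π (C ω)) =ᵐ[P]
      P[(fun ω => if Ee ω = 1 then (1 : ℝ) else 0) | MeasurableSpace.comap C inferInstance])
    (hpos : 0 < P {ω | Ee ω = 1}) (hlt : P {ω | Ee ω = 1} < 1)
    (hden : (∫ ω in {ω | Ee ω = 0}, τ (C ω) ∂P) / (P {ω | Ee ω = 0}).toReal ≠ 0) :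
    ((∫ ω in {ω | Ee ω = 1}, τ (C ω) ∂P) / (P {ω | Ee ω = 1}).toReal)
        / ((∫ ω in {ω | Ee ω = 0}, τ (C ω) ∂P) / (P {ω | Ee ω = 0}).toReal)
      = ((∫ ω, O ω * π (C ω) ∂P) / (P {ω | Ee ω = 1}).toReal)
        / ((∫ ω, O ω * (1 - π (C ω)) ∂P) / (P {ω | Ee ω = 0}).toReal)
    ∧ ((∫ ω in {ω | Ee ω = 1}, τ (C ω) ∂P) / (P {ω | Ee ω = 1}).toReal)
        - ((∫ ω in {ω | Ee ω = 0}, τ (C ω) ∂P) / (P {ω | Ee ω = 0}).toReal)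
      = ((∫ ω, O ω * π (C ω) ∂P) / (P {ω | Ee ω = 1}).toReal)
        - ((∫ ω, O ω * (1 - π (C ω)) ∂P) / (P {ω | Ee ω = 0}).toReal) :=
  stmt2_general O Ee C hO hEe hC hEbin τ π hτver hπver
end

section
/- In the linear data generating mechanism of Section 2.3, P(E=1) = 1/2, and for every j ∈ {1,…,p} the difference score φ_j := E[τ_j(C_j) | E = 1] − E[τ_j(C_j) | E = 0], where τ_j(C_j) is a version of E[O ∣ σ(C_j)] and E[X | E = e] denotes E[X·1_{E=e}]/P(E=e), satisfies φ_j = (α_j/3)·(β_j + θ·α_j). -/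
/-!
Write `π = ∑ α_k C_k` for the propensity score and `τ = τ_j(C_j)`. As `E` is binary,
`P(E = 1) = 𝔼[E] = 𝔼[π] = 1/2` and the difference score is `4 𝔼[τ E] - 2 𝔼[τ]`. Replacing `E` by
`π` (pull-out property) and using independence of the `C_k`, only the `k = j` term of `𝔼[τ π]`
carries a covariance, so the score is `4 α_j Cov(C_j, τ) = 4 α_j Cov(C_j, O)`. Expanding `O`
through its regression on `(E, C)`, and `E` once more through `π`, gives
`Cov(C_j, O) = Var(C_j) (β_j + θ α_j)` with `Var(C_j) = 1/12`.
-/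

open MeasureTheory ProbabilityTheory

theorem integral_mul_eq_of_condExp_ae_eq {Ω : Type*} {m mΩ : MeasurableSpace Ω} {μ : Measure Ω}
    [IsFiniteMeasure μ] (hm : m ≤ mΩ) {g f h : Ω → ℝ} (hg : StronglyMeasurable[m] g)
    (hgf : Integrable (fun ω => g ω * f ω) μ) (hf : Integrable f μ) (hfh : μ[f|m] =ᵐ[μ] h) :
    ∫ ω, g ω * f ω ∂μ = ∫ ω, g ω * h ω ∂μ := by
  rw [← integral_condExp hm]
  refine integral_congr_ae ((condExp_mul_of_stronglyMeasurable_left hg hgf hf).trans ?_)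
  filter_upwards [hfh] with ω hω
  simp [hω]

section Uniform

variable {Ω : Type*} [MeasurableSpace Ω] {μ : Measure Ω} {X : Ω → ℝ}

theorem integral_comp_eq_intervalIntegral_of_map_eq_uniform (hX : Measurable X)
    (hu : μ.map X = volume.restrict (Set.Icc 0 1)) {g : ℝ → ℝ} (hg : Measurable g) :
    ∫ ω, g (X ω) ∂μ = ∫ x in (0 : ℝ)..1, g x := by
  rw [← integral_map hX.aemeasurable hg.aestronglyMeasurable, hu, integral_Icc_eq_integral_Ioc,
    intervalIntegral.integral_of_le zero_le_one]

theorem memLp_top_of_map_eq_uniform (hX : Measurable X)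
    (hu : μ.map X = volume.restrict (Set.Icc 0 1)) : MemLp X ⊤ μ := by
  have hIcc : ∀ᵐ ω ∂μ, X ω ∈ Set.Icc (0 : ℝ) 1 :=
    ae_of_ae_map hX.aemeasurable (hu ▸ ae_restrict_mem measurableSet_Icc)
  refine memLp_top_of_bound hX.aestronglyMeasurable 1 ?_
  filter_upwards [hIcc] with ω hω
  rw [Real.norm_eq_abs, abs_le]
  exact ⟨by linarith [hω.1], hω.2⟩

theorem integral_of_map_eq_uniform (hX : Measurable X)
    (hu : μ.map X = volume.restrict (Set.Icc 0 1)) : ∫ ω, X ω ∂μ = 1 / 2 := by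
  simpa using integral_comp_eq_intervalIntegral_of_map_eq_uniform hX hu measurable_id

theorem integral_sub_half_sq_of_map_eq_uniform (hX : Measurable X)
    (hu : μ.map X = volume.restrict (Set.Icc 0 1)) : ∫ ω, (X ω - 1 / 2) ^ 2 ∂μ = 1 / 12 := by
  rw [integral_comp_eq_intervalIntegral_of_map_eq_uniform hX hu (g := fun x => (x - 1 / 2) ^ 2)
    (by fun_prop), intervalIntegral.integral_comp_sub_right (fun x => x ^ 2), integral_pow]
  norm_num

end Uniform

section Independent

variable {Ω ι : Type*} [MeasurableSpace Ω] {μ : Measure Ω} [Fintype ι] {C : ι → Ω → ℝ} {c : ℝ}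

theorem integral_sum_mul_of_integral_eq (hC : ∀ k, Integrable (C k) μ)
    (hCc : ∀ k, ∫ ω, C k ω ∂μ = c) (a : ι → ℝ) :
    ∫ ω, ∑ k, a k * C k ω ∂μ = c * ∑ k, a k := by
  rw [integral_finsetSum _ fun k _ => (hC k).const_mul (a k), Finset.mul_sum]
  simp_rw [integral_const_mul, hCc, mul_comm]

theorem integral_comp_mul_sum_of_iIndepFun (hCm : ∀ k, Measurable (C k)) (hC : iIndepFun C μ)
    (hCb : ∀ k, MemLp (C k) ⊤ μ) (hCc : ∀ k, ∫ ω, C k ω ∂μ = c) (j : ι) {f : ℝ → ℝ}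
    (hf : Measurable f) (hfj : Integrable (fun ω => f (C j ω)) μ) (a : ι → ℝ) :
    ∫ ω, f (C j ω) * ∑ k, a k * C k ω ∂μ
      = a j * ∫ ω, (C j ω - c) * f (C j ω) ∂μ + c * (∑ k, a k) * ∫ ω, f (C j ω) ∂μ := by
  classical
  have hint : ∀ k, Integrable (fun ω => C k ω * f (C j ω)) μ := fun k =>
    hfj.mul_of_top_right (hCb k)
  have hcov : ∫ ω, (C j ω - c) * f (C j ω) ∂μ
      = ∫ ω, C j ω * f (C j ω) ∂μ - c * ∫ ω, f (C j ω) ∂μ := by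
    simp_rw [sub_mul]
    rw [integral_sub (hint j) (hfj.const_mul c), integral_const_mul]
  have hk : ∀ k, ∫ ω, C k ω * f (C j ω) ∂μ
      = c * ∫ ω, f (C j ω) ∂μ + if k = j then ∫ ω, (C j ω - c) * f (C j ω) ∂μ else 0 := by
    intro k
    split_ifs with hkj
    · rw [hkj, hcov]; ring
    · have hindep := ((hC.indepFun hkj).comp measurable_id hf).integral_fun_mul_eq_mul_integral
        (hCm k).aestronglyMeasurable (hf.comp (hCm j)).aestronglyMeasurable
      simp only [Function.comp_apply, id_eq] at hindep
      rw [hindep, hCc, add_zero]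
  calc ∫ ω, f (C j ω) * ∑ k, a k * C k ω ∂μ
      = ∫ ω, ∑ k, a k * (C k ω * f (C j ω)) ∂μ := by
        congr 1; ext ω; rw [Finset.mul_sum]; congr 1; ext k; ring
    _ = ∑ k, a k * ∫ ω, C k ω * f (C j ω) ∂μ := by
        rw [integral_finsetSum _ fun k _ => (hint k).const_mul (a k)]
        simp_rw [integral_const_mul]
    _ = _ := by
        simp_rw [hk, mul_add, Finset.sum_add_distrib, mul_ite, mul_zero, Finset.sum_ite_eq',
          Finset.mem_univ, if_true, ← Finset.sum_mul]
        ring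

theorem integral_sub_mul_sum_of_iIndepFun [IsProbabilityMeasure μ] (hCm : ∀ k, Measurable (C k))
    (hC : iIndepFun C μ) (hCb : ∀ k, MemLp (C k) ⊤ μ) (hCc : ∀ k, ∫ ω, C k ω ∂μ = c) {v : ℝ}
    (hCv : ∀ k, ∫ ω, (C k ω - c) ^ 2 ∂μ = v) (j : ι) (a : ι → ℝ) :
    ∫ ω, (C j ω - c) * ∑ k, a k * C k ω ∂μ = a j * v := by
  have hCj : Integrable (C j) μ := (hCb j).integrable le_top
  rw [integral_comp_mul_sum_of_iIndepFun hCm hC hCb hCc j (f := fun x => x - c) (by fun_prop)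
    (hCj.sub (integrable_const c)), integral_sub hCj (integrable_const c), hCc, ← hCv j]
  simp [sq]

end Independent

section Binary

variable {Ω : Type*} [MeasurableSpace Ω] {μ : Measure Ω} {E : Ω → ℝ}

theorem setIntegral_setOf_eq_one_eq_integral_mul (hE : Measurable E)
    (hEb : ∀ ω, E ω = 0 ∨ E ω = 1) (f : Ω → ℝ) :
    ∫ ω in {ω | E ω = 1}, f ω ∂μ = ∫ ω, f ω * E ω ∂μ := by
  have hs : MeasurableSet {ω | E ω = 1} := hE (measurableSet_singleton 1)
  rw [← integral_indicator hs]
  congr 1; ext ω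
  rcases hEb ω with h | h <;> simp [h]

theorem setIntegral_setOf_eq_zero_eq_integral_sub (hE : Measurable E)
    (hEb : ∀ ω, E ω = 0 ∨ E ω = 1) {f : Ω → ℝ} (hf : Integrable f μ) :
    ∫ ω in {ω | E ω = 0}, f ω ∂μ = ∫ ω, f ω ∂μ - ∫ ω, f ω * E ω ∂μ := by
  have hfE : Integrable (fun ω => f ω * E ω) μ := by
    refine hf.mul_bdd hE.aestronglyMeasurable (c := 1) (.of_forall fun ω => ?_)
    rcases hEb ω with h | h <;> simp [h]
  have hs : MeasurableSet {ω | E ω = 0} := hE (measurableSet_singleton 0)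
  rw [← integral_sub hf hfE, ← integral_indicator hs]
  congr 1; ext ω
  rcases hEb ω with h | h <;> simp [h]

theorem measureReal_setOf_eq_one_eq_integral (hE : Measurable E)
    (hEb : ∀ ω, E ω = 0 ∨ E ω = 1) : μ.real {ω | E ω = 1} = ∫ ω, E ω ∂μ := by
  simpa using setIntegral_setOf_eq_one_eq_integral_mul (μ := μ) hE hEb fun _ => 1

theorem measureReal_setOf_eq_zero_eq_one_sub_integral [IsProbabilityMeasure μ] (hE : Measurable E)
    (hEb : ∀ ω, E ω = 0 ∨ E ω = 1) : μ.real {ω | E ω = 0} = 1 - ∫ ω, E ω ∂μ := by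
  simpa using setIntegral_setOf_eq_zero_eq_integral_sub (μ := μ) hE hEb (integrable_const 1)

end Binary

section LinearModel

variable {Ω ι : Type*} [MeasurableSpace Ω] {μ : Measure Ω} [Fintype ι] {C : ι → Ω → ℝ} {c : ℝ}

theorem integral_comp_mul_of_condExp_eq_sum [IsFiniteMeasure μ] (hCm : ∀ k, Measurable (C k))
    (hC : iIndepFun C μ)
    (hCb : ∀ k, MemLp (C k) ⊤ μ) (hCc : ∀ k, ∫ ω, C k ω ∂μ = c) {E : Ω → ℝ} (hE : MemLp E ⊤ μ)
    {α : ι → ℝ} (hπ : μ[E | MeasurableSpace.comap (fun ω k => C k ω) inferInstance]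
      =ᵐ[μ] fun ω => ∑ k, α k * C k ω)
    (j : ι) {f : ℝ → ℝ} (hf : Measurable f) (hfj : Integrable (fun ω => f (C j ω)) μ) :
    ∫ ω, f (C j ω) * E ω ∂μ
      = α j * ∫ ω, (C j ω - c) * f (C j ω) ∂μ + c * (∑ k, α k) * ∫ ω, f (C j ω) ∂μ := by
  have hg : StronglyMeasurable[MeasurableSpace.comap (fun ω k => C k ω) inferInstance]
      (fun ω => f (C j ω)) :=
    (hf.comp ((measurable_pi_apply j).comp (comap_measurable fun ω k => C k ω))).stronglyMeasurable
  rw [integral_mul_eq_of_condExp_ae_eq (measurable_pi_lambda _ hCm).comap_le hg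
    (hfj.mul_of_top_left hE) (hE.integrable le_top) hπ]
  exact integral_comp_mul_sum_of_iIndepFun hCm hC hCb hCc j hf hfj α

theorem integral_sub_mul_of_condExp_eq_sum [IsProbabilityMeasure μ] (hCm : ∀ k, Measurable (C k))
    (hC : iIndepFun C μ) (hCb : ∀ k, MemLp (C k) ⊤ μ) (hCc : ∀ k, ∫ ω, C k ω ∂μ = c) {v : ℝ}
    (hCv : ∀ k, ∫ ω, (C k ω - c) ^ 2 ∂μ = v) {E : Ω → ℝ} (hE : MemLp E ⊤ μ)
    {α : ι → ℝ} (hπ : μ[E | MeasurableSpace.comap (fun ω k => C k ω) inferInstance]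
      =ᵐ[μ] fun ω => ∑ k, α k * C k ω) (j : ι) :
    ∫ ω, (C j ω - c) * E ω ∂μ = α j * v := by
  have hcent : Measurable[MeasurableSpace.comap (fun ω k => C k ω) inferInstance]
      (fun ω => C j ω - c) :=
    ((measurable_pi_apply j).comp (comap_measurable fun ω k => C k ω)).sub_const c
  have hcentE : Integrable (fun ω => (C j ω - c) * E ω) μ :=
    (((hCb j).integrable le_top).sub (integrable_const c)).mul_of_top_left hE
  rw [integral_mul_eq_of_condExp_ae_eq (measurable_pi_lambda _ hCm).comap_le
    hcent.stronglyMeasurable hcentE (hE.integrable le_top) hπ]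
  exact integral_sub_mul_sum_of_iIndepFun hCm hC hCb hCc hCv j α

theorem integral_sub_mul_of_condExp_eq_linear [IsProbabilityMeasure μ]
    (hCm : ∀ k, Measurable (C k)) (hC : iIndepFun C μ) (hCb : ∀ k, MemLp (C k) ⊤ μ)
    (hCc : ∀ k, ∫ ω, C k ω ∂μ = c) {v : ℝ}
    (hCv : ∀ k, ∫ ω, (C k ω - c) ^ 2 ∂μ = v) {E : Ω → ℝ} (hEm : Measurable E) (hE : MemLp E ⊤ μ)
    {α : ι → ℝ} (hπ : μ[E | MeasurableSpace.comap (fun ω k => C k ω) inferInstance]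
      =ᵐ[μ] fun ω => ∑ k, α k * C k ω)
    {O : Ω → ℝ} (hO : Integrable O μ) {β₀ θ : ℝ} {β : ι → ℝ}
    (hom : μ[O | MeasurableSpace.comap (fun ω => (E ω, fun k => C k ω)) inferInstance]
      =ᵐ[μ] fun ω => β₀ + θ * E ω + ∑ k, β k * C k ω) (j : ι) :
    ∫ ω, (C j ω - c) * O ω ∂μ = v * (β j + θ * α j) := by
  have hcentLp : MemLp (fun ω => C j ω - c) ⊤ μ := (hCb j).sub (memLp_top_const c)
  have hcent : Integrable (fun ω => C j ω - c) μ := hcentLp.integrable le_top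
  have hcentE : Integrable (fun ω => (C j ω - c) * E ω) μ := hcent.mul_of_top_left hE
  have hcentS : Integrable (fun ω => (C j ω - c) * ∑ k, β k * C k ω) μ :=
    hcent.mul_of_top_left (memLp_finsetSum _ fun k _ => (hCb k).const_mul (β k))
  have hcentEC : Measurable[MeasurableSpace.comap (fun ω => (E ω, fun k => C k ω)) inferInstance]
      (fun ω => C j ω - c) :=
    ((measurable_pi_apply j).comp
      (measurable_snd.comp (comap_measurable fun ω => (E ω, fun k => C k ω)))).sub_const c
  have hmean : ∫ ω, (C j ω - c) ∂μ = 0 := by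
    rw [integral_sub ((hCb j).integrable le_top) (integrable_const c), hCc]
    simp
  rw [integral_mul_eq_of_condExp_ae_eq (hEm.prodMk (measurable_pi_lambda _ hCm)).comap_le
    hcentEC.stronglyMeasurable (hO.mul_of_top_right hcentLp) hO hom]
  calc ∫ ω, (C j ω - c) * (β₀ + θ * E ω + ∑ k, β k * C k ω) ∂μ
      = ∫ ω, β₀ * (C j ω - c) + θ * ((C j ω - c) * E ω)
          + (C j ω - c) * ∑ k, β k * C k ω ∂μ := by
        congr 1; ext ω; ring
    _ = β₀ * 0 + θ * (α j * v) + β j * v := by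
        have h12 : Integrable (fun ω => β₀ * (C j ω - c) + θ * ((C j ω - c) * E ω)) μ :=
          (hcent.const_mul β₀).add (hcentE.const_mul θ)
        rw [integral_add h12 hcentS,
          integral_add (hcent.const_mul β₀) (hcentE.const_mul θ), integral_const_mul,
          integral_const_mul, hmean,
          integral_sub_mul_of_condExp_eq_sum hCm hC hCb hCc hCv hE hπ j,
          integral_sub_mul_sum_of_iIndepFun hCm hC hCb hCc hCv j β]
    _ = v * (β j + θ * α j) := by ring

end LinearModel

theorem stmt7_general
    {Ω : Type*} [MeasurableSpace Ω] {P : Measure Ω} [IsProbabilityMeasure P]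
    {p : ℕ} (C : Fin p → Ω → ℝ) (hCm : ∀ k, Measurable (C k))
    (hCindep : iIndepFun C P)
    (hCunif : ∀ k, Measure.map (C k) P = volume.restrict (Set.Icc (0 : ℝ) 1))
    (Ee : Ω → ℝ) (hEe : Measurable Ee) (hEbin : ∀ ω, Ee ω = 0 ∨ Ee ω = 1)
    (α : Fin p → ℝ) (hαsum : ∑ k, α k = 1)
    (hps : P[(fun ω => if Ee ω = 1 then (1 : ℝ) else 0) |
        MeasurableSpace.comap (fun ω (k : Fin p) => C k ω) inferInstance]
      =ᵐ[P] fun ω => ∑ k, α k * C k ω)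
    (O : Ω → ℝ) (hO : Integrable O P)
    (β₀ θ : ℝ) (β : Fin p → ℝ)
    (hom : P[O | MeasurableSpace.comap (fun ω => (Ee ω, fun k : Fin p => C k ω)) inferInstance]
      =ᵐ[P] fun ω => β₀ + θ * Ee ω + ∑ k, β k * C k ω) :
    P {ω | Ee ω = 1} = 1 / 2
    ∧ ∀ (j : Fin p) (τj : ℝ → ℝ), Measurable τj →
        Integrable (fun ω => τj (C j ω)) P →
        (fun ω => τj (C j ω)) =ᵐ[P] P[O | MeasurableSpace.comap (C j) inferInstance] →
        (∫ ω in {ω | Ee ω = 1}, τj (C j ω) ∂P) / (P {ω | Ee ω = 1}).toReal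
          - (∫ ω in {ω | Ee ω = 0}, τj (C j ω) ∂P) / (P {ω | Ee ω = 0}).toReal
        = α j / 3 * (β j + θ * α j) := by
  have hCb : ∀ k, MemLp (C k) ⊤ P := fun k => memLp_top_of_map_eq_uniform (hCm k) (hCunif k)
  have hCc : ∀ k, ∫ ω, C k ω ∂P = 1 / 2 := fun k => integral_of_map_eq_uniform (hCm k) (hCunif k)
  have hCv : ∀ k, ∫ ω, (C k ω - 1 / 2) ^ 2 ∂P = 1 / 12 := fun k =>
    integral_sub_half_sq_of_map_eq_uniform (hCm k) (hCunif k)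
  have hEb : MemLp Ee ⊤ P := memLp_top_of_bound hEe.aestronglyMeasurable 1
    (.of_forall fun ω => by rcases hEbin ω with h | h <;> simp [h])
  have hπ : P[Ee | MeasurableSpace.comap (fun ω (k : Fin p) => C k ω) inferInstance]
      =ᵐ[P] fun ω => ∑ k, α k * C k ω := by
    convert hps using 3 with ω
    rcases hEbin ω with h | h <;> simp [h]
  have hmeanE : ∫ ω, Ee ω ∂P = 1 / 2 := by
    rw [← integral_condExp (measurable_pi_lambda _ hCm).comap_le, integral_congr_ae hπ,
      integral_sum_mul_of_integral_eq (fun k => (hCb k).integrable le_top) hCc, hαsum, mul_one]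
  have hP1 : P.real {ω | Ee ω = 1} = 1 / 2 := by
    rw [measureReal_setOf_eq_one_eq_integral hEe hEbin, hmeanE]
  refine ⟨?_, fun j τj hτm hτi hτ => ?_⟩
  · rw [← ENNReal.ofReal_toReal (measure_ne_top P _), ← measureReal_def, hP1, one_div,
      ENNReal.ofReal_inv_of_pos two_pos, ENNReal.ofReal_ofNat, one_div]
  have hτE := integral_comp_mul_of_condExp_eq_sum hCm hCindep hCb hCc hEb hπ j hτm hτi
  have hτO : ∫ ω, (C j ω - 1 / 2) * τj (C j ω) ∂P = ∫ ω, (C j ω - 1 / 2) * O ω ∂P :=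
    (integral_mul_eq_of_condExp_ae_eq (hCm j).comap_le
      ((comap_measurable (C j)).sub_const _).stronglyMeasurable
      (hO.mul_of_top_right ((hCb j).sub (memLp_top_const _))) hO hτ.symm).symm
  rw [← measureReal_def, ← measureReal_def, hP1,
    measureReal_setOf_eq_zero_eq_one_sub_integral hEe hEbin, hmeanE,
    setIntegral_setOf_eq_one_eq_integral_mul hEe hEbin,
    setIntegral_setOf_eq_zero_eq_integral_sub hEe hEbin hτi, hτE, hτO, hαsum,
    integral_sub_mul_of_condExp_eq_linear hCm hCindep hCb hCc hCv hEe hEb hπ hO hom j]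
  ring

/-- **Difference score in the linear data generating mechanism of Section 2.3.**
Under the linear DGM, `P(E=1) = 1/2`, and for every `j` the difference score
`φ_j = E[τ_j(C_j) | E=1] − E[τ_j(C_j) | E=0]` (with `τ_j(C_j)` a version of `E[O ∣ σ(C_j)]`)
equals `(α_j/3)(β_j + θ α_j)`. -/
theorem stmt7
    {Ω : Type*} [MeasurableSpace Ω] {P : Measure Ω} [IsProbabilityMeasure P]
    {p : ℕ} (C : Fin p → Ω → ℝ) (hCm : ∀ k, Measurable (C k))
    (hCindep : iIndepFun C P)
    (hCunif : ∀ k, Measure.map (C k) P = volume.restrict (Set.Icc (0 : ℝ) 1))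
    (Ee : Ω → ℝ) (hEe : Measurable Ee) (hEbin : ∀ ω, Ee ω = 0 ∨ Ee ω = 1)
    (α : Fin p → ℝ) (hα : ∀ k, 0 < α k) (hαsum : ∑ k, α k = 1)
    (hps : P[(fun ω => if Ee ω = 1 then (1 : ℝ) else 0) |
        MeasurableSpace.comap (fun ω (k : Fin p) => C k ω) inferInstance]
      =ᵐ[P] fun ω => ∑ k, α k * C k ω)
    (O : Ω → ℝ) (hO : Integrable O P)
    (β₀ θ : ℝ) (β : Fin p → ℝ)
    (hom : P[O | MeasurableSpace.comap (fun ω => (Ee ω, fun k : Fin p => C k ω)) inferInstance]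
      =ᵐ[P] fun ω => β₀ + θ * Ee ω + ∑ k, β k * C k ω) :
    P {ω | Ee ω = 1} = 1 / 2
    ∧ ∀ (j : Fin p) (τj : ℝ → ℝ), Measurable τj →
        Integrable (fun ω => τj (C j ω)) P →
        (fun ω => τj (C j ω)) =ᵐ[P] P[O | MeasurableSpace.comap (C j) inferInstance] →
        (∫ ω in {ω | Ee ω = 1}, τj (C j ω) ∂P) / (P {ω | Ee ω = 1}).toReal
          - (∫ ω in {ω | Ee ω = 0}, τj (C j ω) ∂P) / (P {ω | Ee ω = 0}).toReal
        = α j / 3 * (β j + θ * α j) :=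
  stmt7_general C hCm hCindep hCunif Ee hEe hEbin α hαsum hps O hO β₀ θ β hom
end

section
/- Let τ* : ℝ → ℝ and π* : ℝ → ℝ be bounded measurable functions. Then E[O·π*(C) + τ*(C)·(1_{E=1} − π*(C))] = E[1_{E=1}·τ(C)] + E[(τ(C) − τ*(C))·(π*(C) − π(C))]. Equivalently, with θ(P) = E[1_{E=1}τ(C)] and the uncentered influence function D(ω) = O·π*(C) + τ*(C)(1_{E=1} − π*(C)) − θ*, one has θ* + E[D] = θ(P) + E[(τ(C) − τ*(C))(π*(C) − π(C))] for any θ* ∈ ℝ. (The remainder-term identity R_θ(P, P⁰) of Web Appendix B, Lemma on the functional expansion.) -/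
/-!
Pointwise, the difference between the integrand on the left and the sum of the two integrands on
the right is `π*(C) (O - τ(C)) + (τ*(C) - τ(C)) (1_{E=1} - π(C))`. Each summand is a
`σ(C)`-measurable factor times the residual of a variable from (a version of) its conditional
expectation given `σ(C)`, so it has mean zero by the pull-out property and the tower property.
-/

open MeasureTheory
open scoped ENNReal

namespace MeasureTheory

variable {Ω : Type*} {m m₀ : MeasurableSpace Ω} {P : Measure Ω}

theorem integral_mul_sub_eq_zero_of_ae_eq_condExp [IsFiniteMeasure P] (hm : m ≤ m₀)
    {f g h : Ω → ℝ} (hf : AEStronglyMeasurable[m] f P) (hg : Integrable g P)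
    (hfg : Integrable (f * g) P) (hh : h =ᵐ[P] P[g|m]) :
    ∫ ω, f ω * (g ω - h ω) ∂P = 0 := by
  have pull : P[f * g|m] =ᵐ[P] f * h :=
    (condExp_mul_of_aestronglyMeasurable_left hf hfg hg).trans hh.symm.mul_left
  have tower : ∫ ω, (f * g) ω ∂P = ∫ ω, (f * h) ω ∂P :=
    (integral_condExp hm).symm.trans (integral_congr_ae pull)
  simp only [mul_sub]
  exact (integral_sub hfg (integrable_condExp.congr pull)).trans (sub_eq_zero.2 tower)

theorem memLp_top_comp_of_bounded {β : Type*} [MeasurableSpace β] {f : β → ℝ}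
    (hf : Measurable f) (hb : ∃ M, ∀ x, |f x| ≤ M) {X : Ω → β} (hX : Measurable X) :
    MemLp (fun ω => f (X ω)) ∞ P :=
  let ⟨M, hM⟩ := hb
  memLp_top_of_bound (hf.comp hX).aestronglyMeasurable M (ae_of_all _ fun ω => hM (X ω))

section DoublyRobust

variable [IsFiniteMeasure P] {O A t p ts ps : Ω → ℝ}

theorem integrable_doublyRobust (hO : Integrable O P) (hA : MemLp A ∞ P)
    (hts : MemLp ts ∞ P) (hps : MemLp ps ∞ P) :
    Integrable (fun ω => O ω * ps ω + ts ω * (A ω - ps ω)) P :=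
  (hO.mul_of_top_left hps).add ((hA.sub hps).integrable le_top |>.mul_of_top_right hts)

theorem integral_doublyRobust_eq_add_remainder (hm : m ≤ m₀) (hO : Integrable O P)
    (hA : MemLp A ∞ P) (ht : t =ᵐ[P] P[O|m]) (hp : p =ᵐ[P] P[A|m])
    (hts_meas : AEStronglyMeasurable[m] ts P) (hts : MemLp ts ∞ P)
    (hps_meas : AEStronglyMeasurable[m] ps P) (hps : MemLp ps ∞ P) :
    ∫ ω, (O ω * ps ω + ts ω * (A ω - ps ω)) ∂P
      = ∫ ω, A ω * t ω ∂P + ∫ ω, (t ω - ts ω) * (ps ω - p ω) ∂P := by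
  have ht_int : Integrable t P := integrable_condExp.congr ht.symm
  have ht_meas : AEStronglyMeasurable[m] t P :=
    stronglyMeasurable_condExp.aestronglyMeasurable.congr ht.symm
  have hp_top : MemLp p ∞ P := (hA.condExp le_top).ae_eq hp.symm
  have hA_int : Integrable A P := hA.integrable le_top
  have hts_int : Integrable ts P := hts.integrable le_top
  have hθ_int : Integrable (fun ω => A ω * t ω) P := ht_int.mul_of_top_right hA
  have hR_int : Integrable (fun ω => (t ω - ts ω) * (ps ω - p ω)) P :=
    (ht_int.sub hts_int).mul_of_top_left (hps.sub hp_top)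
  have hθR_int : Integrable (fun ω => A ω * t ω + (t ω - ts ω) * (ps ω - p ω)) P :=
    hθ_int.add hR_int
  have houtcome_int : Integrable (fun ω => ps ω * (O ω - t ω)) P :=
    (hO.sub ht_int).mul_of_top_right hps
  have hexposure_int : Integrable (fun ω => (ts ω - t ω) * (A ω - p ω)) P :=
    (hts_int.sub ht_int).mul_of_top_left (hA.sub hp_top)
  have hresid_int :
      Integrable (fun ω => ps ω * (O ω - t ω) + (ts ω - t ω) * (A ω - p ω)) P :=
    houtcome_int.add hexposure_int
  have outcome_resid : ∫ ω, ps ω * (O ω - t ω) ∂P = 0 :=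
    integral_mul_sub_eq_zero_of_ae_eq_condExp hm hps_meas hO (hO.mul_of_top_right hps) ht
  have exposure_resid : ∫ ω, (ts ω - t ω) * (A ω - p ω) ∂P = 0 :=
    integral_mul_sub_eq_zero_of_ae_eq_condExp hm (hts_meas.sub ht_meas) hA_int
      ((hts_int.sub ht_int).mul_of_top_left hA) hp
  calc ∫ ω, (O ω * ps ω + ts ω * (A ω - ps ω)) ∂P
      = ∫ ω, ((A ω * t ω + (t ω - ts ω) * (ps ω - p ω))
          + (ps ω * (O ω - t ω) + (ts ω - t ω) * (A ω - p ω))) ∂P := by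
        congr 1; ext ω; ring
    _ = ∫ ω, A ω * t ω ∂P + ∫ ω, (t ω - ts ω) * (ps ω - p ω) ∂P := by
        rw [integral_add hθR_int hresid_int, integral_add hθ_int hR_int,
          integral_add houtcome_int hexposure_int,
          outcome_resid, exposure_resid, add_zero, add_zero]

end DoublyRobust

end MeasureTheory

theorem stmt8_general
    {Ω : Type*} [MeasurableSpace Ω] {P : Measure Ω} [IsProbabilityMeasure P]
    (O Ee C : Ω → ℝ)
    (hO : Integrable O P) (hEe : Measurable Ee) (hC : Measurable C)
    (τ π : ℝ → ℝ)
    (hτver : (fun ω => τ (C ω)) =ᵐ[P] P[O | MeasurableSpace.comap C inferInstance])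
    (hπver : (fun ω => π (C ω)) =ᵐ[P]
      P[(fun ω => if Ee ω = 1 then (1 : ℝ) else 0) | MeasurableSpace.comap C inferInstance])
    (τs πs : ℝ → ℝ) (hτsm : Measurable τs) (hπsm : Measurable πs)
    (hτsb : ∃ M, ∀ x, |τs x| ≤ M) (hπsb : ∃ M, ∀ x, |πs x| ≤ M) :
    (∫ ω, (O ω * πs (C ω)
          + τs (C ω) * ((if Ee ω = 1 then (1 : ℝ) else 0) - πs (C ω))) ∂P)
      = (∫ ω, (if Ee ω = 1 then (1 : ℝ) else 0) * τ (C ω) ∂P)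
        + ∫ ω, (τ (C ω) - τs (C ω)) * (πs (C ω) - π (C ω)) ∂P
    ∧ ∀ θs : ℝ,
        θs + (∫ ω, (O ω * πs (C ω)
            + τs (C ω) * ((if Ee ω = 1 then (1 : ℝ) else 0) - πs (C ω)) - θs) ∂P)
          = (∫ ω, (if Ee ω = 1 then (1 : ℝ) else 0) * τ (C ω) ∂P)
            + ∫ ω, (τ (C ω) - τs (C ω)) * (πs (C ω) - π (C ω)) ∂P := by
  have hC_comap : Measurable[MeasurableSpace.comap C inferInstance] C := comap_measurable C
  have hind : MemLp (fun ω => if Ee ω = 1 then (1 : ℝ) else 0) ∞ P :=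
    memLp_top_comp_of_bounded (f := fun x : ℝ => if x = 1 then (1 : ℝ) else 0)
      (measurable_const.ite (measurableSet_singleton 1) measurable_const)
      ⟨1, fun x => by split_ifs <;> norm_num⟩ hEe
  have hτs : MemLp (fun ω => τs (C ω)) ∞ P := memLp_top_comp_of_bounded hτsm hτsb hC
  have hπs : MemLp (fun ω => πs (C ω)) ∞ P := memLp_top_comp_of_bounded hπsm hπsb hC
  have hτs_meas : AEStronglyMeasurable[MeasurableSpace.comap C inferInstance]
      (fun ω => τs (C ω)) P := (hτsm.comp hC_comap).aestronglyMeasurable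
  have hπs_meas : AEStronglyMeasurable[MeasurableSpace.comap C inferInstance]
      (fun ω => πs (C ω)) P := (hπsm.comp hC_comap).aestronglyMeasurable
  have expansion := integral_doublyRobust_eq_add_remainder hC.comap_le hO hind hτver hπver
    hτs_meas hτs hπs_meas hπs
  refine ⟨expansion, fun θs => ?_⟩
  rw [integral_sub (integrable_doublyRobust hO hind hτs hπs) (integrable_const θs), expansion]
  simp

/-- **Remainder-term identity of Web Appendix B.** For bounded measurable `τ*, π*`,
`E[O·π*(C) + τ*(C)(1_{E=1} − π*(C))] = E[1_{E=1}τ(C)] + E[(τ(C) − τ*(C))(π*(C) − π(C))]`;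
equivalently, with `θ(P) = E[1_{E=1}τ(C)]` and
`D = O·π*(C) + τ*(C)(1_{E=1} − π*(C)) − θ*`, one has
`θ* + E[D] = θ(P) + E[(τ(C) − τ*(C))(π*(C) − π(C))]` for every `θ* ∈ ℝ`. -/
theorem stmt8
    {Ω : Type*} [MeasurableSpace Ω] {P : Measure Ω} [IsProbabilityMeasure P]
    (O Ee C : Ω → ℝ)
    (hO : Integrable O P) (hEe : Measurable Ee) (hC : Measurable C)
    (hEbin : ∀ ω, Ee ω = 0 ∨ Ee ω = 1)
    (τ π : ℝ → ℝ) (hτm : Measurable τ) (hπm : Measurable π)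
    (hπ01 : ∀ x, π x ∈ Set.Icc (0 : ℝ) 1)
    (hτint : Integrable (fun ω => τ (C ω)) P)
    (hτver : (fun ω => τ (C ω)) =ᵐ[P] P[O | MeasurableSpace.comap C inferInstance])
    (hπver : (fun ω => π (C ω)) =ᵐ[P]
      P[(fun ω => if Ee ω = 1 then (1 : ℝ) else 0) | MeasurableSpace.comap C inferInstance])
    (τs πs : ℝ → ℝ) (hτsm : Measurable τs) (hπsm : Measurable πs)
    (hτsb : ∃ M, ∀ x, |τs x| ≤ M) (hπsb : ∃ M, ∀ x, |πs x| ≤ M) :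
    (∫ ω, (O ω * πs (C ω)
          + τs (C ω) * ((if Ee ω = 1 then (1 : ℝ) else 0) - πs (C ω))) ∂P)
      = (∫ ω, (if Ee ω = 1 then (1 : ℝ) else 0) * τ (C ω) ∂P)
        + ∫ ω, (τ (C ω) - τs (C ω)) * (πs (C ω) - π (C ω)) ∂P
    ∧ ∀ θs : ℝ,
        θs + (∫ ω, (O ω * πs (C ω)
            + τs (C ω) * ((if Ee ω = 1 then (1 : ℝ) else 0) - πs (C ω)) - θs) ∂P)
          = (∫ ω, (if Ee ω = 1 then (1 : ℝ) else 0) * τ (C ω) ∂P)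
            + ∫ ω, (τ (C ω) - τs (C ω)) * (πs (C ω) - π (C ω)) ∂P :=
  stmt8_general O Ee C hO hEe hC τ π hτver hπver τs πs hτsm hπsm hτsb hπsb
end

section
/- Let τ* : ℝ → ℝ be any measurable function with τ*(C) integrable. Then E[O·π(C) + τ*(C)·(1_{E=1} − π(C))] = E[1_{E=1}·τ(C)] = θ(P). (Double-robustness identity when the propensity score is correctly specified; the second case in the proof of the double robustness lemma of Web Appendix A.) -/
/-!
Write `A` for the exposure indicator, `e = E[A | σ(C)]` for the propensity score and
`τ = E[O | σ(C)]` for the outcome regression. Since `τ*(C)` is `σ(C)`-measurable, pulling it out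
of the conditional expectation kills the augmentation term:
`E[τ*(C) (A - e)] = E[τ*(C) (E[A | σ(C)] - e)] = 0`.
Pulling out `e` and `τ` in the same way gives `E[O e] = E[τ e] = E[τ A]`.
-/

open MeasureTheory ProbabilityTheory

section DoubleRobustness

variable {Ω : Type*} {m m₀ : MeasurableSpace Ω} {P : Measure Ω}

theorem integral_mul_of_ae_eq_condExp (hm : m ≤ m₀) [SigmaFinite (P.trim hm)]
    {f X Y : Ω → ℝ} (hf : AEStronglyMeasurable[m] f P) (hY : Y =ᵐ[P] P[X | m])
    (hX : Integrable X P) (hfX : Integrable (f * X) P) :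
    ∫ ω, f ω * X ω ∂P = ∫ ω, f ω * Y ω ∂P := by
  refine (integral_condExp (f := f * X) hm).symm.trans (integral_congr_ae ?_)
  filter_upwards [condExp_mul_of_aestronglyMeasurable_left hf hfX hX, hY] with ω hpull hYω
  rw [hpull, Pi.mul_apply, hYω]

theorem aestronglyMeasurable_of_ae_eq_condExp {X Y : Ω → ℝ} (hY : Y =ᵐ[P] P[X | m]) :
    AEStronglyMeasurable[m] Y P :=
  stronglyMeasurable_condExp.aestronglyMeasurable.congr hY.symm

theorem integral_add_mul_sub_eq_of_ae_eq_condExp [IsFiniteMeasure P] (hm : m ≤ m₀)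
    {X A e τ g : Ω → ℝ} {R : ℝ} (hX : Integrable X P) (hAm : AEStronglyMeasurable A P)
    (hAR : ∀ᵐ ω ∂P, |A ω| ≤ R) (hτ : τ =ᵐ[P] P[X | m]) (he : e =ᵐ[P] P[A | m])
    (hgm : AEStronglyMeasurable[m] g P) (hg : Integrable g P) :
    ∫ ω, X ω * e ω + g ω * (A ω - e ω) ∂P = ∫ ω, A ω * τ ω ∂P := by
  have hem := aestronglyMeasurable_of_ae_eq_condExp he
  have hτm := aestronglyMeasurable_of_ae_eq_condExp hτ
  have heR : ∀ᵐ ω ∂P, ‖e ω‖ ≤ R := by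
    filter_upwards [he, ae_bdd_abs_condExp_of_ae_bdd_abs (m := m) hAR] with ω hω hbdd
    rwa [Real.norm_eq_abs, hω]
  have hAR' : ∀ᵐ ω ∂P, ‖A ω‖ ≤ R := by simpa only [Real.norm_eq_abs] using hAR
  have hA : Integrable A P := .of_bound hAm R hAR'
  have hτi : Integrable τ P := integrable_condExp.congr hτ.symm
  have heX : Integrable (e * X) P := hX.bdd_mul (hem.mono hm) heR
  have hgA : Integrable (g * A) P := hg.mul_bdd hAm hAR'
  have hge : Integrable (g * e) P := hg.mul_bdd (hem.mono hm) heR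
  have hτA : Integrable (τ * A) P := hτi.mul_bdd hAm hAR'
  have hOutcome : ∫ ω, e ω * X ω ∂P = ∫ ω, e ω * τ ω ∂P :=
    integral_mul_of_ae_eq_condExp hm hem hτ hX heX
  have hAugmentation : ∫ ω, g ω * A ω ∂P = ∫ ω, g ω * e ω ∂P :=
    integral_mul_of_ae_eq_condExp hm hgm he hA hgA
  have hTarget : ∫ ω, τ ω * A ω ∂P = ∫ ω, τ ω * e ω ∂P :=
    integral_mul_of_ae_eq_condExp hm hτm he hA hτA
  calc ∫ ω, X ω * e ω + g ω * (A ω - e ω) ∂P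
      = ∫ ω, e ω * X ω + (g ω * A ω - g ω * e ω) ∂P := by
        congr 1 with ω
        ring
    _ = ∫ ω, e ω * X ω ∂P + (∫ ω, g ω * A ω ∂P - ∫ ω, g ω * e ω ∂P) :=
        (integral_add heX (hgA.sub hge)).trans (congrArg _ (integral_sub hgA hge))
    _ = ∫ ω, τ ω * A ω ∂P := by
        rw [hOutcome, hAugmentation, hTarget, sub_self, add_zero]
        simp only [mul_comm]
    _ = ∫ ω, A ω * τ ω ∂P := by simp only [mul_comm]

end DoubleRobustness

theorem stmt10_general
    {Ω : Type*} [MeasurableSpace Ω] {P : Measure Ω} [IsProbabilityMeasure P]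
    (O Ee C : Ω → ℝ)
    (hO : Integrable O P) (hEe : Measurable Ee) (hC : Measurable C)
    (τ π : ℝ → ℝ)
    (hτver : (fun ω => τ (C ω)) =ᵐ[P] P[O | MeasurableSpace.comap C inferInstance])
    (hπver : (fun ω => π (C ω)) =ᵐ[P]
      P[(fun ω => if Ee ω = 1 then (1 : ℝ) else 0) | MeasurableSpace.comap C inferInstance])
    (τs : ℝ → ℝ) (hτsm : Measurable τs) (hτsint : Integrable (fun ω => τs (C ω)) P) :
    (∫ ω, (O ω * π (C ω)
          + τs (C ω) * ((if Ee ω = 1 then (1 : ℝ) else 0) - π (C ω))) ∂P)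
      = ∫ ω, (if Ee ω = 1 then (1 : ℝ) else 0) * τ (C ω) ∂P := by
  have hExposure : Measurable fun ω => if Ee ω = 1 then (1 : ℝ) else 0 :=
    Measurable.ite (hEe (measurableSet_singleton 1)) measurable_const measurable_const
  have hExposureBound : ∀ ω, |if Ee ω = 1 then (1 : ℝ) else 0| ≤ 1 := by
    intro ω
    split_ifs <;> norm_num
  exact integral_add_mul_sub_eq_of_ae_eq_condExp hC.comap_le hO hExposure.aestronglyMeasurable
    (.of_forall hExposureBound) hτver hπver
    (hτsm.comp (comap_measurable C)).aestronglyMeasurable hτsint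

/-- **Double robustness, propensity score correctly specified (Web Appendix A).**
For any measurable `τ*` with `τ*(C)` integrable,
`E[O·π(C) + τ*(C)(1_{E=1} − π(C))] = E[1_{E=1}·τ(C)] = θ(P)`. -/
theorem stmt10
    {Ω : Type*} [MeasurableSpace Ω] {P : Measure Ω} [IsProbabilityMeasure P]
    (O Ee C : Ω → ℝ)
    (hO : Integrable O P) (hEe : Measurable Ee) (hC : Measurable C)
    (hEbin : ∀ ω, Ee ω = 0 ∨ Ee ω = 1)
    (τ π : ℝ → ℝ) (hτm : Measurable τ) (hπm : Measurable π)
    (hπ01 : ∀ x, π x ∈ Set.Icc (0 : ℝ) 1)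
    (hτint : Integrable (fun ω => τ (C ω)) P)
    (hτver : (fun ω => τ (C ω)) =ᵐ[P] P[O | MeasurableSpace.comap C inferInstance])
    (hπver : (fun ω => π (C ω)) =ᵐ[P]
      P[(fun ω => if Ee ω = 1 then (1 : ℝ) else 0) | MeasurableSpace.comap C inferInstance])
    (τs : ℝ → ℝ) (hτsm : Measurable τs) (hτsint : Integrable (fun ω => τs (C ω)) P) :
    (∫ ω, (O ω * π (C ω)
          + τs (C ω) * ((if Ee ω = 1 then (1 : ℝ) else 0) - π (C ω))) ∂P)
      = ∫ ω, (if Ee ω = 1 then (1 : ℝ) else 0) * τ (C ω) ∂P :=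
  stmt10_general O Ee C hO hEe hC τ π hτver hπver τs hτsm hτsint
end

section
/- Let (O_i, E_i, C_i), i = 1, 2, …, be i.i.d. copies of (O, E, C). Let τ_n, π_n : ℝ → ℝ be measurable functions, uniformly bounded in n, converging pointwise to limits τ* and π* respectively, with τ*, π* bounded. If either τ* = τ almost everywhere with respect to the law of C, or π* = π almost everywhere with respect to the law of C, then the doubly robust estimator θ̂_n = n^{-1} Σ_{i=1}^n [1_{E_i=1}·τ_n(C_i) + O_i·π_n(C_i) − τ_n(C_i)·π_n(C_i)] converges in probability to θ(P) = E[1_{E=1}·τ(C)]. (The double robustness lemma of Web Appendix A.) -/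
/-!
The estimator is the empirical mean of the score `drScore τₙ πₙ` over the copies. Replacing
`τₙ, πₙ` by their limits changes it by a quantity whose L¹ norm is at most
`E |drScore τₙ πₙ - drScore τ* π*| (O, E, C)`, which tends to zero by dominated convergence, while
the mean of the fixed score `drScore τ* π*` converges by the strong law of large numbers.
Since the residuals `1_{E=1} - π(C)` and `O - τ(C)` are orthogonal to every function of `C`,
the limit is `E[drScore τ* π* (O, E, C)] = θ(P) + E[(π - π*)(C) (τ* - τ)(C)]`, and the bias
term vanishes as soon as one of its two factors vanishes almost everywhere.
-/

open MeasureTheory ProbabilityTheory Filter Topology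

section ConvergenceInMeasure

variable {Ω ι : Type*} {mΩ : MeasurableSpace Ω} {μ : Measure Ω} {l : Filter ι}

theorem MeasureTheory.TendstoInMeasure.add {f f' : ι → Ω → ℝ} {g g' : Ω → ℝ}
    (hf : TendstoInMeasure μ f l g) (hf' : TendstoInMeasure μ f' l g') :
    TendstoInMeasure μ (fun n ω => f n ω + f' n ω) l (fun ω => g ω + g' ω) := by
  rw [tendstoInMeasure_iff_dist] at *
  intro ε hε
  have hsum := (hf (ε / 2) (half_pos hε)).add (hf' (ε / 2) (half_pos hε))
  rw [add_zero] at hsum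
  refine tendsto_of_tendsto_of_tendsto_of_le_of_le tendsto_const_nhds hsum (fun _ => zero_le)
    fun n => (measure_mono fun ω hω => ?_).trans (measure_union_le _ _)
  by_contra hnot
  simp only [Set.mem_ofPred_eq, Set.mem_union, not_or, not_le] at hω hnot
  have := dist_add_add_le (f n ω) (f' n ω) (g ω) (g' ω)
  linarith

theorem tendstoInMeasure_zero_of_tendsto_integral_abs {f : ι → Ω → ℝ}
    (hf : ∀ n, Integrable (f n) μ) (h : Tendsto (fun n => ∫ ω, |f n ω| ∂μ) l (𝓝 0)) :
    TendstoInMeasure μ f l 0 := by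
  refine tendstoInMeasure_of_tendsto_eLpNorm one_ne_zero (fun n => (hf n).aestronglyMeasurable)
    aestronglyMeasurable_zero ?_
  simp_rw [sub_zero, eLpNorm_one_eq_lintegral_enorm,
    ← ofReal_integral_norm_eq_lintegral_enorm (hf _), Real.norm_eq_abs]
  simpa using (ENNReal.tendsto_ofReal h)

end ConvergenceInMeasure

theorem integral_mul_sub_condExp_eq_zero {Ω : Type*} {mΩ : MeasurableSpace Ω} {P : Measure Ω}
    [IsFiniteMeasure P] {m : MeasurableSpace Ω} (hm : m ≤ mΩ) {f g v : Ω → ℝ}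
    (hf : StronglyMeasurable[m] f) (hg : Integrable g P)
    (hfg : Integrable (fun ω => f ω * g ω) P) (hv : v =ᵐ[P] P[g|m]) :
    ∫ ω, f ω * (g ω - v ω) ∂P = 0 := by
  have hpull : P[fun ω => f ω * g ω|m] =ᵐ[P] fun ω => f ω * v ω := by
    filter_upwards [condExp_mul_of_stronglyMeasurable_left hf hfg hg, hv] with ω h hω
    exact h.trans (congrArg (f ω * ·) hω.symm)
  have hfv : Integrable (fun ω => f ω * v ω) P := integrable_condExp.congr hpull
  simp_rw [mul_sub]
  rw [integral_sub hfg hfv, ← integral_congr_ae hpull, integral_condExp hm, sub_self]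

section Averages

variable {Ω β : Type*} {mΩ : MeasurableSpace Ω} [MeasurableSpace β] {P : Measure Ω}
  {T : ℕ → Ω → β} {μ : Measure β}

theorem tendstoInMeasure_average_comp [IsProbabilityMeasure P] (hT : ∀ i, Measurable (T i))
    (hindep : iIndepFun T P) (hlaw : ∀ i, P.map (T i) = μ) {g : β → ℝ} (hg : Measurable g)
    (hgμ : Integrable g μ) :
    TendstoInMeasure P (fun (n : ℕ) ω => (n : ℝ)⁻¹ * ∑ i ∈ Finset.range n, g (T i ω)) atTop
      (fun _ => ∫ x, g x ∂μ) := by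
  have hident : ∀ i, IdentDistrib (fun ω => g (T i ω)) (fun ω => g (T 0 ω)) P P := fun i =>
    (IdentDistrib.mk (hT i).aemeasurable (hT 0).aemeasurable (by rw [hlaw, hlaw])).comp hg
  have hint : Integrable (fun ω => g (T 0 ω)) P := (hlaw 0 ▸ hgμ).comp_measurable (hT 0)
  have hmean : ∫ ω, g (T 0 ω) ∂P = ∫ x, g x ∂μ := by
    rw [← hlaw 0, integral_map (hT 0).aemeasurable hg.aestronglyMeasurable]
  refine tendstoInMeasure_of_tendsto_ae (fun n => ?_) ?_
  · exact ((Finset.measurable_sum _ fun i _ => hg.comp (hT i)).const_mul _).aestronglyMeasurable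
  filter_upwards [strong_law_ae _ hint (fun i j hij => (hindep.indepFun hij).comp hg hg) hident]
    with ω hω
  simpa [hmean] using hω

theorem integral_abs_average_le (hT : ∀ i, Measurable (T i)) (hlaw : ∀ i, P.map (T i) = μ)
    {f : β → ℝ} (hf : Integrable f μ) (n : ℕ) :
    ∫ ω, |(n : ℝ)⁻¹ * ∑ i ∈ Finset.range n, f (T i ω)| ∂P ≤ ∫ x, |f x| ∂μ := by
  have hfT : ∀ i, Integrable (fun ω => f (T i ω)) P := fun i =>
    (hlaw i ▸ hf).comp_measurable (hT i)
  have hfT_abs : ∀ i, ∫ ω, |f (T i ω)| ∂P = ∫ x, |f x| ∂μ := fun i => by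
    rw [← hlaw i, integral_map (hT i).aemeasurable (hlaw i ▸ hf.abs).aestronglyMeasurable]
  calc ∫ ω, |(n : ℝ)⁻¹ * ∑ i ∈ Finset.range n, f (T i ω)| ∂P
      ≤ ∫ ω, (n : ℝ)⁻¹ * ∑ i ∈ Finset.range n, |f (T i ω)| ∂P := by
        refine integral_mono ((integrable_finsetSum _ fun i _ => hfT i).const_mul _).abs
          ((integrable_finsetSum _ fun i _ => (hfT i).abs).const_mul _) fun ω => ?_
        rw [abs_mul, abs_inv, Nat.abs_cast]
        gcongr
        exact Finset.abs_sum_le_sum_abs _ _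
    _ = (n : ℝ)⁻¹ * n * ∫ x, |f x| ∂μ := by
        rw [integral_const_mul, integral_finsetSum _ fun i _ => (hfT i).abs]
        simp [hfT_abs, mul_assoc]
    _ ≤ ∫ x, |f x| ∂μ := by
        refine mul_le_of_le_one_left (integral_nonneg fun _ => abs_nonneg _) ?_
        rcases n.eq_zero_or_pos with rfl | hn
        · simp
        · rw [inv_mul_cancel₀ (by positivity)]

theorem tendstoInMeasure_average_zero (hT : ∀ i, Measurable (T i))
    (hlaw : ∀ i, P.map (T i) = μ) {f : ℕ → β → ℝ} (hf : ∀ n, Integrable (f n) μ)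
    (hlim : Tendsto (fun n => ∫ x, |f n x| ∂μ) atTop (𝓝 0)) :
    TendstoInMeasure P (fun (n : ℕ) ω => (n : ℝ)⁻¹ * ∑ i ∈ Finset.range n, f n (T i ω)) atTop
      0 := by
  refine tendstoInMeasure_zero_of_tendsto_integral_abs (fun n => ?_) <|
    squeeze_zero (fun n => integral_nonneg fun _ => abs_nonneg _)
      (fun n => integral_abs_average_le hT hlaw (hf n) n) hlim
  exact (integrable_finsetSum _ fun i _ => (hlaw i ▸ hf n).comp_measurable (hT i)).const_mul _

theorem tendstoInMeasure_average_of_tendsto_integral_abs [IsProbabilityMeasure P]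
    (hT : ∀ i, Measurable (T i)) (hindep : iIndepFun T P) (hlaw : ∀ i, P.map (T i) = μ)
    {G : ℕ → β → ℝ} {g : β → ℝ} (hGμ : ∀ n, Integrable (G n) μ) (hg : Measurable g)
    (hgμ : Integrable g μ) (hGg : Tendsto (fun n => ∫ x, |G n x - g x| ∂μ) atTop (𝓝 0)) :
    TendstoInMeasure P (fun (n : ℕ) ω => (n : ℝ)⁻¹ * ∑ i ∈ Finset.range n, G n (T i ω)) atTop
      (fun _ => ∫ x, g x ∂μ) := by
  have hsum := (tendstoInMeasure_average_comp hT hindep hlaw hg hgμ).add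
    (tendstoInMeasure_average_zero hT hlaw (fun n => (hGμ n).sub hgμ) hGg)
  convert hsum using 2 with n ω
  · simp only [Pi.sub_apply, ← mul_add, ← Finset.sum_add_distrib, add_sub_cancel]
  · simp

end Averages

noncomputable def drScore (t p : ℝ → ℝ) : ℝ × ℝ × ℝ → ℝ
  | (o, e, c) => (if e = 1 then 1 else 0) * t c + o * p c - t c * p c

theorem measurable_drScore {t p : ℝ → ℝ} (ht : Measurable t) (hp : Measurable p) :
    Measurable (drScore t p) := by
  have hind : Measurable fun x : ℝ × ℝ × ℝ => (if x.2.1 = 1 then 1 else 0 : ℝ) :=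
    Measurable.ite (measurableSet_eq_fun (by fun_prop) measurable_const) measurable_const
      measurable_const
  unfold drScore
  fun_prop

theorem abs_drScore_le {t p : ℝ → ℝ} {M : ℝ} (ht : ∀ c, |t c| ≤ M) (hp : ∀ c, |p c| ≤ M)
    (x : ℝ × ℝ × ℝ) : |drScore t p x| ≤ M + |x.1| * M + M * M := by
  obtain ⟨o, e, c⟩ := x
  have hind : |(if e = 1 then 1 else 0 : ℝ)| ≤ 1 := by split_ifs <;> simp
  have hM : 0 ≤ M := (abs_nonneg _).trans (ht 0)
  calc |drScore t p (o, e, c)|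
      ≤ |(if e = 1 then 1 else 0 : ℝ)| * |t c| + |o| * |p c| + |t c| * |p c| := by
        simp only [drScore, ← abs_mul]
        exact (abs_sub _ _).trans (by gcongr; exact abs_add_le _ _)
    _ ≤ 1 * M + |o| * M + M * M := by gcongr <;> simp [ht, hp]
    _ = M + |o| * M + M * M := by ring

section Integrability

variable {μ : Measure (ℝ × ℝ × ℝ)} [IsFiniteMeasure μ] {M : ℝ}

theorem integrable_drScore (hfst : Integrable (fun x => x.1) μ) {t p : ℝ → ℝ}
    (htm : Measurable t) (hpm : Measurable p) (ht : ∀ c, |t c| ≤ M) (hp : ∀ c, |p c| ≤ M) :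
    Integrable (drScore t p) μ :=
  (((integrable_const M).add (hfst.abs.mul_const M)).add (integrable_const (M * M))).mono'
    (measurable_drScore htm hpm).aestronglyMeasurable
    (Eventually.of_forall fun x => abs_drScore_le ht hp x)

theorem tendsto_integral_abs_drScore_sub (hfst : Integrable (fun x => x.1) μ)
    {tn pn : ℕ → ℝ → ℝ} {t p : ℝ → ℝ} (htnm : ∀ n, Measurable (tn n))
    (hpnm : ∀ n, Measurable (pn n)) (htm : Measurable t) (hpm : Measurable p)
    (htn : ∀ n c, |tn n c| ≤ M) (hpn : ∀ n c, |pn n c| ≤ M) (ht : ∀ c, |t c| ≤ M)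
    (hp : ∀ c, |p c| ≤ M) (htlim : ∀ c, Tendsto (fun n => tn n c) atTop (𝓝 (t c)))
    (hplim : ∀ c, Tendsto (fun n => pn n c) atTop (𝓝 (p c))) :
    Tendsto (fun n => ∫ x, |drScore (tn n) (pn n) x - drScore t p x| ∂μ) atTop (𝓝 0) := by
  have hlim : ∀ x, Tendsto (fun n => drScore (tn n) (pn n) x) atTop (𝓝 (drScore t p x)) :=
    fun ⟨o, e, c⟩ => ((tendsto_const_nhds.mul (htlim c)).add
      (tendsto_const_nhds.mul (hplim c))).sub ((htlim c).mul (hplim c))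
  have hdom := tendsto_integral_of_dominated_convergence
    (fun x => 2 * (M + |x.1| * M + M * M))
    (fun n => ((measurable_drScore (htnm n) (hpnm n)).sub
      (measurable_drScore htm hpm)).abs.aestronglyMeasurable)
    ((((integrable_const M).add (hfst.abs.mul_const M)).add (integrable_const (M * M))).const_mul 2)
    (fun n => Eventually.of_forall fun x => by
      rw [Real.norm_eq_abs, abs_abs, Pi.sub_apply]
      linarith [abs_sub (drScore (tn n) (pn n) x) (drScore t p x),
        abs_drScore_le (htn n) (hpn n) x, abs_drScore_le ht hp x])
    (Eventually.of_forall fun x => ((hlim x).sub_const _).abs)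
  simpa using hdom

end Integrability

theorem integral_drScore_eq_add {Ω : Type*} [MeasurableSpace Ω] {P : Measure Ω}
    [IsFiniteMeasure P] {O E C : Ω → ℝ} (hO : Integrable O P) (hE : Measurable E)
    (hC : Measurable C) {τ π : ℝ → ℝ} (hτm : Measurable τ) (hπm : Measurable π)
    (hπ01 : ∀ x, π x ∈ Set.Icc (0 : ℝ) 1) (hτint : Integrable (fun ω => τ (C ω)) P)
    (hτver : (fun ω => τ (C ω)) =ᵐ[P] P[O | MeasurableSpace.comap C inferInstance])
    (hπver : (fun ω => π (C ω)) =ᵐ[P]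
      P[(fun ω => if E ω = 1 then (1 : ℝ) else 0) | MeasurableSpace.comap C inferInstance])
    {τs πs : ℝ → ℝ} (hτsm : Measurable τs) (hπsm : Measurable πs) {M : ℝ}
    (hτs : ∀ x, |τs x| ≤ M) (hπs : ∀ x, |πs x| ≤ M) :
    ∫ ω, drScore τs πs (O ω, E ω, C ω) ∂P
      = ∫ ω, (if E ω = 1 then (1 : ℝ) else 0) * τ (C ω) ∂P
        + ∫ ω, (π (C ω) - πs (C ω)) * (τs (C ω) - τ (C ω)) ∂P := by
  set I : Ω → ℝ := fun ω => if E ω = 1 then 1 else 0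
  have hIm : Measurable I :=
    Measurable.ite (measurableSet_eq_fun hE measurable_const) measurable_const measurable_const
  have hI : ∀ ω, ‖I ω‖ ≤ 1 := fun ω => by simp only [I]; split_ifs <;> simp
  have hπ : ∀ x, ‖π x‖ ≤ 1 := fun x => abs_le.2 ⟨by linarith [(hπ01 x).1], (hπ01 x).2⟩
  have hmeasC : ∀ {h : ℝ → ℝ}, Measurable h →
      StronglyMeasurable[MeasurableSpace.comap C inferInstance] fun ω => h (C ω) :=
    fun hh => (hh.comp (comap_measurable C)).stronglyMeasurable
  have hτsint : Integrable (fun ω => τs (C ω) - τ (C ω)) P :=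
    ((integrable_const M).mono' (hτsm.comp hC).aestronglyMeasurable
      (Eventually.of_forall fun ω => hτs _)).sub hτint
  have hregression : ∫ ω, πs (C ω) * (O ω - τ (C ω)) ∂P = 0 :=
    integral_mul_sub_condExp_eq_zero hC.comap_le (hmeasC hπsm) hO
      (hO.bdd_mul (hπsm.comp hC).aestronglyMeasurable (Eventually.of_forall fun ω => hπs _))
      hτver
  have hpropensity : ∫ ω, (τs (C ω) - τ (C ω)) * (I ω - π (C ω)) ∂P = 0 :=
    integral_mul_sub_condExp_eq_zero hC.comap_le (hmeasC (hτsm.sub hτm))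
      (integrable_const 1 |>.mono' hIm.aestronglyMeasurable (Eventually.of_forall hI))
      (hτsint.mul_bdd hIm.aestronglyMeasurable (Eventually.of_forall hI)) hπver
  have hIτ : Integrable (fun ω => I ω * τ (C ω)) P :=
    hτint.bdd_mul hIm.aestronglyMeasurable (Eventually.of_forall hI)
  have hT1 : Integrable (fun ω => (τs (C ω) - τ (C ω)) * (I ω - π (C ω))) P :=
    hτsint.mul_bdd (hIm.sub (hπm.comp hC)).aestronglyMeasurable
      (Eventually.of_forall fun ω => (norm_sub_le _ _).trans (add_le_add (hI ω) (hπ _)))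
  have hT2 : Integrable (fun ω => πs (C ω) * (O ω - τ (C ω))) P :=
    (hO.sub hτint).bdd_mul (hπsm.comp hC).aestronglyMeasurable
      (Eventually.of_forall fun ω => hπs _)
  have hT3 : Integrable (fun ω => (π (C ω) - πs (C ω)) * (τs (C ω) - τ (C ω))) P :=
    hτsint.bdd_mul ((hπm.comp hC).sub (hπsm.comp hC)).aestronglyMeasurable
      (Eventually.of_forall fun ω => (norm_sub_le _ _).trans (add_le_add (hπ _) (hπs _)))
  calc ∫ ω, drScore τs πs (O ω, E ω, C ω) ∂P
      = ∫ ω, I ω * τ (C ω) + ((τs (C ω) - τ (C ω)) * (I ω - π (C ω))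
          + πs (C ω) * (O ω - τ (C ω))) + (π (C ω) - πs (C ω)) * (τs (C ω) - τ (C ω)) ∂P := by
        congr with ω
        simp only [drScore, I]
        ring
    _ = _ := by
        rw [integral_add, integral_add, integral_add hT1 hT2, hpropensity, hregression, add_zero,
          add_zero]
        exacts [hIτ, hT1.add hT2, hIτ.add (hT1.add hT2), hT3]

theorem stmt18_general
    {Ω : Type*} [MeasurableSpace Ω] {P : Measure Ω} [IsProbabilityMeasure P]
    (O Ee C : Ω → ℝ)
    (hOm : Measurable O) (hO : Integrable O P) (hEe : Measurable Ee) (hC : Measurable C)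
    (τ π : ℝ → ℝ) (hτm : Measurable τ) (hπm : Measurable π)
    (hπ01 : ∀ x, π x ∈ Set.Icc (0 : ℝ) 1)
    (hτint : Integrable (fun ω => τ (C ω)) P)
    (hτver : (fun ω => τ (C ω)) =ᵐ[P] P[O | MeasurableSpace.comap C inferInstance])
    (hπver : (fun ω => π (C ω)) =ᵐ[P]
      P[(fun ω => if Ee ω = 1 then (1 : ℝ) else 0) | MeasurableSpace.comap C inferInstance])
    -- the i.i.d. sequence of copies of (O, E, C)
    (Oi Ei Ci : ℕ → Ω → ℝ)
    (hm : ∀ i, Measurable fun ω => (Oi i ω, Ei i ω, Ci i ω))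
    (hiid : iIndepFun (fun i ω => (Oi i ω, Ei i ω, Ci i ω)) P)
    (hlaw : ∀ i, Measure.map (fun ω => (Oi i ω, Ei i ω, Ci i ω)) P
      = Measure.map (fun ω => (O ω, Ee ω, C ω)) P)
    -- the estimated nuisance functions and their limits
    (τn πn : ℕ → ℝ → ℝ) (hτnm : ∀ n, Measurable (τn n)) (hπnm : ∀ n, Measurable (πn n))
    (hub : ∃ M : ℝ, ∀ n x, |τn n x| ≤ M ∧ |πn n x| ≤ M)
    (τs πs : ℝ → ℝ)
    (hτs : ∀ x, Tendsto (fun n => τn n x) atTop (nhds (τs x)))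
    (hπs : ∀ x, Tendsto (fun n => πn n x) atTop (nhds (πs x)))
    -- either the outcome regression or the propensity score is correctly specified
    (hdr : (∀ᵐ x ∂(Measure.map C P), τs x = τ x) ∨ (∀ᵐ x ∂(Measure.map C P), πs x = π x)) :
    TendstoInMeasure P
      (fun (n : ℕ) ω => (n : ℝ)⁻¹ * ∑ i ∈ Finset.range n,
        ((if Ei i ω = 1 then (1 : ℝ) else 0) * τn n (Ci i ω)
          + Oi i ω * πn n (Ci i ω) - τn n (Ci i ω) * πn n (Ci i ω)))
      atTop
      (fun _ => ∫ ω, (if Ee ω = 1 then (1 : ℝ) else 0) * τ (C ω) ∂P) := by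
  obtain ⟨M, hM⟩ := hub
  have hτnM : ∀ n x, |τn n x| ≤ M := fun n x => (hM n x).1
  have hπnM : ∀ n x, |πn n x| ≤ M := fun n x => (hM n x).2
  have hτsM : ∀ x, |τs x| ≤ M := fun x => le_of_tendsto' (hτs x).abs (hτnM · x)
  have hπsM : ∀ x, |πs x| ≤ M := fun x => le_of_tendsto' (hπs x).abs (hπnM · x)
  have hτsm : Measurable τs := measurable_of_tendsto_metrizable' atTop hτnm (tendsto_pi_nhds.2 hτs)
  have hπsm : Measurable πs := measurable_of_tendsto_metrizable' atTop hπnm (tendsto_pi_nhds.2 hπs)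
  have hX : Measurable fun ω => (O ω, Ee ω, C ω) := hOm.prodMk (hEe.prodMk hC)
  have hfst : Integrable (fun x => x.1) (P.map fun ω => (O ω, Ee ω, C ω)) :=
    (integrable_map_measure measurable_fst.aestronglyMeasurable hX.aemeasurable).2 hO
  have hbias : ∫ ω, (π (C ω) - πs (C ω)) * (τs (C ω) - τ (C ω)) ∂P = 0 := by
    refine integral_eq_zero_of_ae ?_
    rcases hdr with h | h <;> filter_upwards [ae_of_ae_map hC.aemeasurable h] with ω hω <;>
      simp [hω]
  have hmean : ∫ x, drScore τs πs x ∂(P.map fun ω => (O ω, Ee ω, C ω))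
      = ∫ ω, (if Ee ω = 1 then (1 : ℝ) else 0) * τ (C ω) ∂P := by
    rw [integral_map hX.aemeasurable (measurable_drScore hτsm hπsm).aestronglyMeasurable,
      integral_drScore_eq_add hO hEe hC hτm hπm hπ01 hτint hτver hπver hτsm hπsm hτsM hπsM, hbias,
      add_zero]
  rw [← hmean]
  exact tendstoInMeasure_average_of_tendsto_integral_abs (G := fun n => drScore (τn n) (πn n))
    (T := fun i ω => (Oi i ω, Ei i ω, Ci i ω)) hm hiid hlaw
    (fun n => integrable_drScore hfst (hτnm n) (hπnm n) (hτnM n) (hπnM n))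
    (measurable_drScore hτsm hπsm) (integrable_drScore hfst hτsm hπsm hτsM hπsM)
    (tendsto_integral_abs_drScore_sub hfst hτnm hπnm hτsm hπsm hτnM hπnM hτsM hπsM hτs hπs)

/-- **Double robustness lemma of Web Appendix A.** For i.i.d. copies `(O_i, E_i, C_i)` of
`(O, E, C)` and uniformly bounded measurable `τ_n, π_n` converging pointwise to bounded
limits `τ*, π*`, if either `τ* = τ` a.e.-law of `C` or `π* = π` a.e.-law of `C`, then the
doubly robust estimator
`θ̂_n = n⁻¹ Σ_{i<n} [1_{E_i=1}·τ_n(C_i) + O_i·π_n(C_i) − τ_n(C_i)·π_n(C_i)]`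
converges in probability to `θ(P) = E[1_{E=1}·τ(C)]`. -/
theorem stmt18
    {Ω : Type*} [MeasurableSpace Ω] {P : Measure Ω} [IsProbabilityMeasure P]
    (O Ee C : Ω → ℝ)
    (hOm : Measurable O) (hO : Integrable O P) (hEe : Measurable Ee) (hC : Measurable C)
    (hEbin : ∀ ω, Ee ω = 0 ∨ Ee ω = 1)
    (τ π : ℝ → ℝ) (hτm : Measurable τ) (hπm : Measurable π)
    (hπ01 : ∀ x, π x ∈ Set.Icc (0 : ℝ) 1)
    (hτint : Integrable (fun ω => τ (C ω)) P)
    (hτver : (fun ω => τ (C ω)) =ᵐ[P] P[O | MeasurableSpace.comap C inferInstance])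
    (hπver : (fun ω => π (C ω)) =ᵐ[P]
      P[(fun ω => if Ee ω = 1 then (1 : ℝ) else 0) | MeasurableSpace.comap C inferInstance])
    -- the i.i.d. sequence of copies of (O, E, C)
    (Oi Ei Ci : ℕ → Ω → ℝ)
    (hm : ∀ i, Measurable fun ω => (Oi i ω, Ei i ω, Ci i ω))
    (hiid : iIndepFun (fun i ω => (Oi i ω, Ei i ω, Ci i ω)) P)
    (hlaw : ∀ i, Measure.map (fun ω => (Oi i ω, Ei i ω, Ci i ω)) P
      = Measure.map (fun ω => (O ω, Ee ω, C ω)) P)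
    -- the estimated nuisance functions and their limits
    (τn πn : ℕ → ℝ → ℝ) (hτnm : ∀ n, Measurable (τn n)) (hπnm : ∀ n, Measurable (πn n))
    (hub : ∃ M : ℝ, ∀ n x, |τn n x| ≤ M ∧ |πn n x| ≤ M)
    (τs πs : ℝ → ℝ)
    (hτs : ∀ x, Tendsto (fun n => τn n x) atTop (nhds (τs x)))
    (hπs : ∀ x, Tendsto (fun n => πn n x) atTop (nhds (πs x)))
    (hτsb : ∃ M : ℝ, ∀ x, |τs x| ≤ M) (hπsb : ∃ M : ℝ, ∀ x, |πs x| ≤ M)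
    -- either the outcome regression or the propensity score is correctly specified
    (hdr : (∀ᵐ x ∂(Measure.map C P), τs x = τ x) ∨ (∀ᵐ x ∂(Measure.map C P), πs x = π x)) :
    TendstoInMeasure P
      (fun (n : ℕ) ω => (n : ℝ)⁻¹ * ∑ i ∈ Finset.range n,
        ((if Ei i ω = 1 then (1 : ℝ) else 0) * τn n (Ci i ω)
          + Oi i ω * πn n (Ci i ω) - τn n (Ci i ω) * πn n (Ci i ω)))
      atTop
      (fun _ => ∫ ω, (if Ee ω = 1 then (1 : ℝ) else 0) * τ (C ω) ∂P) :=
  stmt18_general O Ee C hOm hO hEe hC τ π hτm hπm hπ01 hτint hτver hπver Oi Ei Ci hm hiid hlaw τn πn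
    hτnm hπnm hub τs πs hτs hπs hdr
end
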